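/- Let n ≥ 2 and suppose u ∈ C²(ℝ²) is a bounded entire solution of Δu = W'(u) on ℝ² with u(ℝ²) ⊂ [a,b], where W ∈ C¹(ℝ) satisfies W'(a) = W'(b) = 0 and W' < 0 on (a,b). Then u is constant: either u ≡ a or u ≡ b. -/

import Mathlib

open Real MeasureTheory Filter Set

noncomputable def lap {n : ℕ} (f : EuclideanSpace ℝ (Fin n) → ℝ) (x : EuclideanSpace ℝ (Fin n)) : ℝ :=
  ∑ i : Fin n, iteratedFDeriv ℝ 2 f x ![EuclideanSpace.single i 1, EuclideanSpace.single i 1]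

/-!
A function `u` on the plane with `Δu ≤ 0` that is bounded below is constant. On an annulus
`r ≤ ‖y - c‖ ≤ R` the function `u + ε log ‖y - c‖²` is still superharmonic, because `log ‖·‖²` is
harmonic in dimension two, so it attains its minimum on one of the two boundary circles. As
`R → ∞` the logarithm beats the lower bound of `u`, so the minimum sits on the inner circle;
letting `ε → 0` gives `u x ≥ min_{‖y - c‖ = r} u`, and `r → 0` gives `u x ≥ u c`.
Here `Δu = W'(u) ≤ 0` on `[a, b]`, and the constant value of `u` is a zero of `W'` in `[a, b]`.
-/

open InnerProductSpace Laplacian Topology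

theorem IsLocalMin.deriv_deriv_nonneg {f : ℝ → ℝ} {x : ℝ} (hmin : IsLocalMin f x)
    (hf : ContinuousAt f x) : 0 ≤ deriv (deriv f) x := by
  by_contra! hneg
  have hmax : IsLocalMax f x := isLocalMax_of_deriv_deriv_neg hneg hmin.deriv_eq_zero hf
  have hconst : f =ᶠ[𝓝 x] fun _ => f x := by
    filter_upwards [hmin, hmax] with y h₁ h₂ using le_antisymm h₂ h₁
  have hderiv : deriv f =ᶠ[𝓝 x] fun _ => 0 := by
    filter_upwards [hconst.eventuallyEq_nhds] with y hy
    rw [hy.deriv_eq, deriv_const]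
  rw [hderiv.deriv_eq, deriv_const] at hneg
  exact lt_irrefl _ hneg

section LineRestriction

variable {E F : Type*} [NormedAddCommGroup E] [NormedSpace ℝ E] [NormedAddCommGroup F]
  [NormedSpace ℝ F]

theorem ContDiffAt.iteratedFDeriv_two_apply_self {f : E → F} {z : E} (hf : ContDiffAt ℝ 2 f z)
    (v : E) : iteratedFDeriv ℝ 2 f z ![v, v] = deriv (deriv fun t : ℝ => f (z + t • v)) 0 := by
  have hline : ∀ t : ℝ, HasDerivAt (fun s : ℝ => z + s • v) v t := fun t => by
    simpa using ((hasDerivAt_id t).smul_const v).const_add z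
  have hline_cont : Tendsto (fun t : ℝ => z + t • v) (𝓝 0) (𝓝 z) := by
    simpa using (hline 0).continuousAt.tendsto
  have hderiv : deriv (fun t : ℝ => f (z + t • v)) =ᶠ[𝓝 0]
      fun t => fderiv ℝ f (z + t • v) v := by
    filter_upwards [hline_cont.eventually (hf.eventually (by simp))] with t ht
    exact ((ht.differentiableAt (by simp)).hasFDerivAt.comp_hasDerivAt t (hline t)).deriv
  have hf' : DifferentiableAt ℝ (fderiv ℝ f) z :=
    (hf.fderiv_right (m := 1) (by norm_num)).differentiableAt (by simp)
  have h2 : HasDerivAt (fun t : ℝ => fderiv ℝ f (z + t • v) v) (fderiv ℝ (fderiv ℝ f) z v v) 0 :=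
    ((ContinuousLinearMap.apply ℝ F v).hasFDerivAt.comp z hf'.hasFDerivAt).comp_hasDerivAt_of_eq
      (x := 0) (hline 0) (by simp)
  rw [hderiv.deriv_eq, h2.deriv, iteratedFDeriv_two_apply]
  rfl

end LineRestriction

theorem norm_add_smul_sq {E : Type*} [NormedAddCommGroup E] [InnerProductSpace ℝ E] (w v : E)
    (t : ℝ) :
    ‖w + t • v‖ ^ 2 = ‖w‖ ^ 2 + 2 * inner ℝ w v * t + ‖v‖ ^ 2 * t ^ 2 := by
  rw [norm_add_sq_real, inner_smul_right, norm_smul, mul_pow, Real.norm_eq_abs, sq_abs]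
  ring

theorem hasDerivAt_quadratic (a b c t : ℝ) :
    HasDerivAt (fun t => a + b * t + c * t ^ 2) (b + 2 * c * t) t := by
  have h := (((hasDerivAt_id' t).const_mul b).const_add a).add ((hasDerivAt_pow 2 t).const_mul c)
  exact h.congr_deriv (by norm_num; ring)

theorem deriv_deriv_quadratic (a b c : ℝ) :
    deriv (deriv fun t : ℝ => a + b * t + c * t ^ 2) 0 = 2 * c := by
  have hderiv : deriv (fun t : ℝ => a + b * t + c * t ^ 2) = fun t => b + 2 * c * t + 0 * t ^ 2 :=
    funext fun t => by simpa using (hasDerivAt_quadratic a b c t).deriv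
  rw [hderiv, (hasDerivAt_quadratic b (2 * c) 0 0).deriv]
  ring

theorem deriv_deriv_log_quadratic {a : ℝ} (ha : 0 < a) (b c : ℝ) :
    deriv (deriv fun t : ℝ => log (a + b * t + c * t ^ 2)) 0 = (2 * c * a - b ^ 2) / a ^ 2 := by
  have hpos : ∀ᶠ t in 𝓝 (0 : ℝ), 0 < a + b * t + c * t ^ 2 :=
    (hasDerivAt_quadratic a b c 0).continuousAt.eventually (lt_mem_nhds (by simpa using ha))
  have hderiv : deriv (fun t => log (a + b * t + c * t ^ 2)) =ᶠ[𝓝 0]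
      fun t => (b + 2 * c * t + 0 * t ^ 2) / (a + b * t + c * t ^ 2) := by
    filter_upwards [hpos] with t ht
    simpa using ((hasDerivAt_quadratic a b c t).log ht.ne').deriv
  have hquot : HasDerivAt (fun t => (b + 2 * c * t + 0 * t ^ 2) / (a + b * t + c * t ^ 2))
      ((2 * c * a - b ^ 2) / a ^ 2) 0 :=
    ((hasDerivAt_quadratic b (2 * c) 0 0).div (hasDerivAt_quadratic a b c 0)
      (by simpa using ha.ne')).congr_deriv (by simp; ring)
  rw [hderiv.deriv_eq, hquot.deriv]

section Laplacian

variable {E : Type*} [NormedAddCommGroup E] [InnerProductSpace ℝ E] [FiniteDimensional ℝ E]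

theorem ContDiffAt.laplacian_eq_sum_deriv_deriv {f : E → ℝ} {z : E} (hf : ContDiffAt ℝ 2 f z)
    {ι : Type*} [Fintype ι] (b : OrthonormalBasis ι ℝ E) :
    Δ f z = ∑ i, deriv (deriv fun t : ℝ => f (z + t • b i)) 0 := by
  simp only [laplacian_eq_iteratedFDeriv_orthonormalBasis f b, hf.iteratedFDeriv_two_apply_self]

theorem IsLocalMin.laplacian_nonneg {f : E → ℝ} {z : E} (hmin : IsLocalMin f z)
    (hf : ContDiffAt ℝ 2 f z) : 0 ≤ Δ f z := by
  rw [hf.laplacian_eq_sum_deriv_deriv (stdOrthonormalBasis ℝ E)]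
  refine Finset.sum_nonneg fun i _ => IsLocalMin.deriv_deriv_nonneg ?_ ?_
  · exact IsLocalMin.comp_continuous (g := fun t : ℝ => z + t • _) (by simpa using hmin)
      (by fun_prop)
  · exact ContinuousAt.comp (g := f) (by simpa using hf.continuousAt) (by fun_prop)

theorem laplacian_norm_sub_sq (c z : E) :
    Δ (fun y => ‖y - c‖ ^ 2) z = 2 * Module.finrank ℝ E := by
  have hf : ContDiffAt ℝ 2 (fun y => ‖y - c‖ ^ 2) z :=
    ((contDiff_norm_sq ℝ).comp (contDiff_id.sub contDiff_const)).contDiffAt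
  rw [hf.laplacian_eq_sum_deriv_deriv (stdOrthonormalBasis ℝ E)]
  simp_rw [add_sub_right_comm z, norm_add_smul_sq, deriv_deriv_quadratic,
    (stdOrthonormalBasis ℝ E).orthonormal.1]
  simp [mul_comm]

theorem laplacian_log_norm_sub_sq {c z : E} (hz : z ≠ c) :
    Δ (fun y => log (‖y - c‖ ^ 2)) z = 2 * (Module.finrank ℝ E - 2) / ‖z - c‖ ^ 2 := by
  have hpos : 0 < ‖z - c‖ ^ 2 := by positivity [sub_ne_zero.2 hz]
  have hf : ContDiffAt ℝ 2 (fun y => log (‖y - c‖ ^ 2)) z :=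
    ((contDiff_norm_sq ℝ).comp (contDiff_id.sub contDiff_const)).contDiffAt.log hpos.ne'
  set b := stdOrthonormalBasis ℝ E
  have hparseval : ∑ i, inner ℝ (z - c) (b i) ^ 2 = ‖z - c‖ ^ 2 := by
    simpa [sq, real_inner_comm, real_inner_self_eq_norm_sq] using
      b.sum_inner_mul_inner (z - c) (z - c)
  rw [hf.laplacian_eq_sum_deriv_deriv b]
  simp_rw [add_sub_right_comm z, norm_add_smul_sq, deriv_deriv_log_quadratic hpos,
    b.orthonormal.1]
  rw [← Finset.sum_div]
  simp only [mul_pow, Finset.sum_sub_distrib, ← Finset.mul_sum, hparseval]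
  simp only [one_pow, mul_one, Finset.sum_const, Finset.card_univ, Fintype.card_fin, nsmul_eq_mul]
  field_simp

theorem IsCompact.le_of_laplacian_nonpos_of_forall_frontier_le [Nontrivial E] {K : Set E}
    (hK : IsCompact K) {f : E → ℝ} (hfK : ContinuousOn f K)
    (hf : ∀ z ∈ interior K, ContDiffAt ℝ 2 f z) (hΔ : ∀ z ∈ interior K, Δ f z ≤ 0) {m : ℝ}
    (hm : ∀ z ∈ frontier K, m ≤ f z) {y : E} (hy : y ∈ K) : m ≤ f y := by
  obtain ⟨R, hR⟩ := hK.isBounded.subset_closedBall y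
  have hq : ContDiff ℝ 2 fun x : E => ‖x - y‖ ^ 2 :=
    (contDiff_norm_sq ℝ).comp (contDiff_id.sub contDiff_const)
  -- subtracting `δ ‖x - y‖²` makes `f` strictly superharmonic, so its minimum is on the frontier
  have hδ : ∀ δ > 0, m ≤ f y + δ * R ^ 2 := by
    intro δ hδ
    obtain ⟨z, hzK, hzmin⟩ := hK.exists_isMinOn ⟨y, hy⟩
      (hfK.sub (hq.continuous.continuousOn.const_smul δ))
    have hz : z ∈ frontier K := by
      rw [hK.isClosed.frontier_eq]
      refine ⟨hzK, fun hzi => ?_⟩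
      have hδq : ContDiffAt ℝ 2 (δ • fun x : E => ‖x - y‖ ^ 2) z := hq.contDiffAt.const_smul δ
      have hΔg := (hzmin.isLocalMin (mem_interior_iff_mem_nhds.1 hzi)).laplacian_nonneg
        ((hf z hzi).sub hδq)
      rw [(hf z hzi).laplacian_sub hδq, laplacian_smul _ hq.contDiffAt,
        laplacian_norm_sub_sq] at hΔg
      have : (0 : ℝ) < Module.finrank ℝ E := by exact_mod_cast Module.finrank_pos
      have := hΔ z hzi
      simp only [smul_eq_mul, sub_nonneg] at hΔg
      nlinarith
    have hzy : ‖z - y‖ ≤ R := by simpa [dist_eq_norm] using hR hzK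
    have hzy2 : δ * ‖z - y‖ ^ 2 ≤ δ * R ^ 2 := by gcongr
    have hmin : f z - δ * ‖z - y‖ ^ 2 ≤ f y := by simpa using hzmin hy
    linarith [hm z hz]
  refine le_of_forall_pos_le_add fun ε hε => ?_
  calc m ≤ f y + ε / (R ^ 2 + 1) * R ^ 2 := hδ _ (by positivity)
    _ ≤ f y + ε := by
      gcongr
      rw [div_mul_eq_mul_div, div_le_iff₀ (by positivity)]
      nlinarith

end Laplacian

theorem frontier_closedBall_diff_ball_subset {X : Type*} [PseudoMetricSpace X] (c : X) (r R : ℝ) :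
    frontier (Metric.closedBall c R \ Metric.ball c r) ⊆ Metric.sphere c r ∪ Metric.sphere c R := by
  have hopen : Metric.ball c R \ Metric.closedBall c r ⊆
      interior (Metric.closedBall c R \ Metric.ball c r) :=
    interior_maximal
      (sdiff_subset_sdiff Metric.ball_subset_closedBall Metric.ball_subset_closedBall)
      (Metric.isOpen_ball.sdiff Metric.isClosed_closedBall)
  rw [(Metric.isClosed_closedBall.sdiff Metric.isOpen_ball).frontier_eq]
  rintro z ⟨⟨hzR, hzr⟩, hz⟩
  simp only [Metric.mem_closedBall, Metric.mem_ball, not_lt] at hzR hzr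
  by_contra! h
  simp only [Set.mem_union, Metric.mem_sphere, not_or] at h
  exact hz (hopen ⟨Metric.mem_ball.2 (lt_of_le_of_ne hzR h.2),
    fun h' => h.1 (le_antisymm (Metric.mem_closedBall.1 h') hzr)⟩)

section Liouville

variable {E : Type*} [NormedAddCommGroup E] [InnerProductSpace ℝ E] [FiniteDimensional ℝ E]

theorem le_add_mul_log_of_forall_sphere_le (hE : Module.finrank ℝ E = 2) {u : E → ℝ}
    (hu : ContDiff ℝ 2 u) (hΔ : ∀ y, Δ u y ≤ 0) {m : ℝ} (hm : ∀ y, m ≤ u y) {c x : E} {r M ε : ℝ}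
    (hr : 0 < r) (hrx : r < dist x c) (hε : 0 < ε) (hM : ∀ y ∈ Metric.sphere c r, M ≤ u y) :
    M ≤ u x + ε * (log (‖x - c‖ ^ 2) - log (r ^ 2)) := by
  have hlog : Tendsto (fun R : ℝ => log (R ^ 2)) atTop atTop :=
    tendsto_log_atTop.comp (tendsto_pow_atTop two_ne_zero)
  obtain ⟨R, hRlog, hxR⟩ := ((hlog.eventually_ge_atTop ((M - m) / ε + log (r ^ 2))).and
    (eventually_gt_atTop (dist x c))).exists
  rw [div_add' _ _ _ hε.ne', div_le_iff₀ hε] at hRlog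
  have : Nontrivial E := Module.nontrivial_of_finrank_pos (R := ℝ) (by omega)
  set K := Metric.closedBall c R \ Metric.ball c r
  have hK : IsCompact K := (isCompact_closedBall c R).diff Metric.isOpen_ball
  have hKc : ∀ y ∈ K, y ≠ c := by
    rintro y ⟨-, hy⟩ rfl
    exact hy (Metric.mem_ball_self hr)
  have hL : ∀ y ∈ K, ContDiffAt ℝ 2 (fun y => log (‖y - c‖ ^ 2)) y := fun y hy =>
    ((contDiff_norm_sq ℝ).comp (contDiff_id.sub contDiff_const)).contDiffAt.log
      (by simpa [sub_eq_zero] using hKc y hy)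
  have hεL : ∀ y ∈ K, ContDiffAt ℝ 2 (ε • fun y => log (‖y - c‖ ^ 2)) y := fun y hy =>
    (hL y hy).const_smul ε
  have := hK.le_of_laplacian_nonpos_of_forall_frontier_le (f := u + ε • fun y => log (‖y - c‖ ^ 2))
    (m := M + ε * log (r ^ 2)) (y := x) ?_ ?_ ?_ ?_ ?_
  · simp only [Pi.add_apply, Pi.smul_apply, smul_eq_mul] at this
    linarith
  · exact fun y hy => (hu.contDiffAt.add (hεL y hy)).continuousAt.continuousWithinAt
  · exact fun y hy => hu.contDiffAt.add (hεL y (interior_subset hy))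
  · intro y hy
    rw [hu.contDiffAt.laplacian_add (hεL y (interior_subset hy)),
      laplacian_smul _ (hL y (interior_subset hy)),
      laplacian_log_norm_sub_sq (hKc y (interior_subset hy)), hE]
    simpa using hΔ y
  · intro y hy
    rcases frontier_closedBall_diff_ball_subset c r R hy with hyr | hyR
    · simp [← mem_sphere_iff_norm.1 hyr, hM y hyr]
    · simp only [Pi.add_apply, Pi.smul_apply, smul_eq_mul, mem_sphere_iff_norm.1 hyR]
      linarith [hm y]
  · exact ⟨hxR.le, by simpa using hrx.le⟩

theorem le_of_forall_sphere_le (hE : Module.finrank ℝ E = 2) {u : E → ℝ}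
    (hu : ContDiff ℝ 2 u) (hΔ : ∀ y, Δ u y ≤ 0) {m : ℝ} (hm : ∀ y, m ≤ u y) {c x : E} {r M : ℝ}
    (hr : 0 < r) (hrx : r < dist x c) (hM : ∀ y ∈ Metric.sphere c r, M ≤ u y) : M ≤ u x := by
  set T := log (‖x - c‖ ^ 2) - log (r ^ 2)
  have hT : 0 ≤ T := sub_nonneg.2 <| log_le_log (by positivity) <| by
    rw [← dist_eq_norm]; gcongr
  refine le_of_forall_pos_le_add fun η hη => ?_
  calc M ≤ u x + η / (T + 1) * T :=
        le_add_mul_log_of_forall_sphere_le hE hu hΔ hm hr hrx (by positivity) hM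
    _ ≤ u x + η := by
      gcongr
      rw [div_mul_eq_mul_div, div_le_iff₀ (by positivity)]
      nlinarith

theorem eq_of_laplacian_nonpos_of_bddBelow (hE : Module.finrank ℝ E = 2) {u : E → ℝ}
    (hu : ContDiff ℝ 2 u) (hΔ : ∀ y, Δ u y ≤ 0) (hbdd : BddBelow (Set.range u)) (x y : E) :
    u x = u y := by
  obtain ⟨m, hm⟩ := hbdd
  suffices h : ∀ z c, u c ≤ u z from le_antisymm (h y x) (h x y)
  intro z c
  rcases eq_or_ne z c with rfl | hzc
  · rfl
  refine le_of_forall_pos_le_add fun η hη => ?_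
  obtain ⟨r₀, hr₀, hcont⟩ := Metric.continuousAt_iff.1 hu.continuous.continuousAt η hη
  have hdist : 0 < dist z c := dist_pos.2 hzc
  have hsphere : ∀ y ∈ Metric.sphere c (min r₀ (dist z c) / 2), u c - η ≤ u y := fun y hy => by
    have := hcont (x := y) (by rw [Metric.mem_sphere.1 hy]; linarith [min_le_left r₀ (dist z c)])
    linarith [(abs_lt.1 (Real.dist_eq _ _ ▸ this)).1]
  have := le_of_forall_sphere_le (x := z) hE hu hΔ (fun y => hm ⟨y, rfl⟩) (by positivity)
    (by linarith [min_le_right r₀ (dist z c)]) hsphere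
  linarith

end Liouville

theorem lap_eq_laplacian {n : ℕ} (f : EuclideanSpace ℝ (Fin n) → ℝ) : lap f = Δ f := by
  ext x
  simp [lap, laplacian_eq_iteratedFDeriv_orthonormalBasis f (EuclideanSpace.basisFun (Fin n) ℝ)]

theorem stmt_4_general (a b : ℝ) (W : ℝ → ℝ)
    (hWa : deriv W a = 0) (hWb : deriv W b = 0)
    (hW' : ∀ s, a < s → s < b → deriv W s < 0)
    (u : EuclideanSpace ℝ (Fin 2) → ℝ) (hu : ContDiff ℝ 2 u)
    (heq : ∀ x, lap u x = deriv W (u x))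
    (hrange : ∀ x, u x ∈ Set.Icc a b) :
    (∀ x, u x = a) ∨ (∀ x, u x = b) := by
  have hsign : ∀ s ∈ Icc a b, deriv W s ≤ 0 := by
    rintro s ⟨has, hsb⟩
    rcases has.eq_or_lt with rfl | has
    · exact hWa.le
    rcases hsb.eq_or_lt with rfl | hsb
    · exact hWb.le
    exact (hW' s has hsb).le
  have hΔ : ∀ x, Δ u x ≤ 0 := fun x => by
    rw [← lap_eq_laplacian, heq x]
    exact hsign _ (hrange x)
  have hconst : u = fun _ => u 0 := funext fun x =>
    eq_of_laplacian_nonpos_of_bddBelow finrank_euclideanSpace_fin hu hΔ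
      ⟨a, by rintro _ ⟨y, rfl⟩; exact (hrange y).1⟩ x 0
  have hcrit : deriv W (u 0) = 0 := by
    rw [← heq 0, lap_eq_laplacian, hconst, laplacian_const]
    rfl
  rcases (hrange 0).1.eq_or_lt with ha | ha
  · exact Or.inl fun x => by rw [hconst, ha]
  rcases (hrange 0).2.eq_or_lt with hb | hb
  · exact Or.inr fun x => by rw [hconst, hb]
  exact absurd hcrit (hW' _ ha hb).ne

theorem stmt_4 (a b : ℝ) (W : ℝ → ℝ) (hW : ContDiff ℝ 1 W)
    (hWa : deriv W a = 0) (hWb : deriv W b = 0)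
    (hW' : ∀ s, a < s → s < b → deriv W s < 0)
    (u : EuclideanSpace ℝ (Fin 2) → ℝ) (hu : ContDiff ℝ 2 u)
    (hbdd : ∃ M, ∀ x, |u x| ≤ M)
    (heq : ∀ x, lap u x = deriv W (u x))
    (hrange : ∀ x, u x ∈ Set.Icc a b) :
    (∀ x, u x = a) ∨ (∀ x, u x = b) :=
  stmt_4_general a b W hWa hWb hW' u hu heq hrange
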